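/- Let k be a perfect field of characteristic p > 0 and M a k-vector space. Then the k[Z/pZ]-module M^{⊗p} (cyclic permutation action) is tight: the map Coker(tr) → Ker(tr) induced by the canonical map from invariants to coinvariants is an isomorphism. -/

import Mathlib

open scoped TensorProduct

/-- The cyclic permutation `σ` of the `p`-th tensor power `M^{⊗p}`, as a `k`-linear map. -/
noncomputable def cyclicPerm (k M : Type*) [CommRing k] [AddCommGroup M] [Module k M]
    (p : ℕ) :
    PiTensorProduct k (fun _ : Fin p => M) →ₗ[k] PiTensorProduct k (fun _ : Fin p => M) :=
  (PiTensorProduct.reindex k (fun _ : Fin p => M) (finRotate p)).toLinearMap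

/-- A `k`-linear endomorphism `σ` (thought of as generating a `Z/pZ`-action) is *tight* if
the map `Coker(tr) → Ker(tr)` induced by the canonical map `e : M^σ → M_σ` is an
isomorphism, where `tr = N = 1 + σ + ⋯ + σ^{p-1}`.  Unwound: (surjectivity) every `x` with
`N x = 0` is congruent modulo `range (1 - σ)` (i.e. modulo elements `y - σ y`) to an
invariant element; (injectivity) every invariant element which lies in `range (1 - σ)`
lies in the image of `N`. -/
def IsTight {k M : Type*} [CommRing k] [AddCommGroup M] [Module k M] (p : ℕ)
    (σ : M →ₗ[k] M) : Prop :=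
  (∀ x : M, (∑ i ∈ Finset.range p, σ ^ i) x = 0 →
      ∃ m y : M, σ m = m ∧ x = m + (y - σ y)) ∧
  (∀ m : M, σ m = m → (∃ y : M, m = y - σ y) →
      ∃ y : M, m = (∑ i ∈ Finset.range p, σ ^ i) y)

/-!
Choose a basis `S` of `M`. Then `M^{⊗p}` is the permutation module `k[S^p]`, and the
rotation `τ` of `S^p` satisfies `τ^p = 1`; as `p` is prime, every point of `S^p` is either
fixed by `τ` or lies in a cycle of length exactly `p`. Choosing a representative `ρ` in each
cycle, and writing each point of a free cycle as `a = τ^d ρ` with `d < p`, the map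
`h : e_a ↦ ∑_{l<d} e_{τ^l ρ}` satisfies
  `(1 - σ) h = R N + P - 1`  and  `h (1 - σ) = N R σ + P - 1`,
where `σ` is the induced shift, `N = ∑_{i<p} σ^i`, `P` projects onto the fixed points and `R`
onto the representatives of free cycles. As `σ P = P = P σ`, the first identity gives
`x = P x - (1 - σ) h x` whenever `N x = 0`, and the second gives `m = N (R m)` for every
invariant `m` in the image of `1 - σ`.
-/

open Finset

namespace Equiv.Perm

variable {α : Type*} {τ : Perm α} {p : ℕ} {x y : α}

theorem SameCycle.exists_pow_eq_of_pow_eq_one (hp : 0 < p) (hτ : τ ^ p = 1)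
    (h : SameCycle τ x y) : ∃ n < p, (τ ^ n) x = y := by
  obtain ⟨i, rfl⟩ := h
  have hmod : 0 ≤ i % (p : ℤ) := Int.emod_nonneg i (by omega)
  have hlt : i % (p : ℤ) < p := Int.emod_lt_of_pos i (by omega)
  refine ⟨(i % (p : ℤ)).toNat, by omega, ?_⟩
  rw [← zpow_natCast, Int.toNat_of_nonneg hmod, ← zpow_eq_zpow_emod' i hτ]

theorem minimalPeriod_eq_of_prime (hp : p.Prime) (hτ : τ ^ p = 1) (hx : τ x ≠ x) :
    Function.minimalPeriod τ x = p := by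
  have hper : Function.IsPeriodicPt τ p x := by
    rw [Function.IsPeriodicPt, Function.IsFixedPt, ← coe_pow, hτ, one_apply]
  refine (hp.eq_one_or_self_of_dvd _ hper.minimalPeriod_dvd).resolve_left fun h1 => hx ?_
  exact Function.minimalPeriod_eq_one_iff_isFixedPt.mp h1

theorem injOn_pow_apply_of_prime (hp : p.Prime) (hτ : τ ^ p = 1) (hx : τ x ≠ x) :
    (Set.Iio p).InjOn fun n => (τ ^ n) x := by
  simpa only [coe_pow, minimalPeriod_eq_of_prime hp hτ hx] using
    Function.iterate_injOn_Iio_minimalPeriod (f := τ) (x := x)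

variable (τ) in
noncomputable def cycleRep (x : α) : α :=
  (Quotient.mk (SameCycle.setoid τ) x).out

theorem sameCycle_cycleRep (x : α) : SameCycle τ (cycleRep τ x) x :=
  Quotient.mk_out (s := SameCycle.setoid τ) x

theorem SameCycle.cycleRep_eq (h : SameCycle τ x y) : cycleRep τ x = cycleRep τ y :=
  congrArg Quotient.out (Quotient.sound (s := SameCycle.setoid τ) h)

@[simp]
theorem cycleRep_apply (x : α) : cycleRep τ (τ x) = cycleRep τ x :=
  SameCycle.rfl.apply_left.cycleRep_eq

@[simp]
theorem cycleRep_pow_apply (n : ℕ) (x : α) : cycleRep τ ((τ ^ n) x) = cycleRep τ x :=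
  SameCycle.rfl.pow_left.cycleRep_eq

@[simp]
theorem cycleRep_cycleRep (x : α) : cycleRep τ (cycleRep τ x) = cycleRep τ x :=
  (sameCycle_cycleRep x).cycleRep_eq

theorem cycleRep_eq_self_of_fixed (hx : τ x = x) : cycleRep τ x = x :=
  (sameCycle_cycleRep x).eq_of_right hx

-- `sInf ∅ = 0`: the value is meaningful only on finite cycles.
variable (τ) in
noncomputable def cycleIndex (x : α) : ℕ :=
  sInf {n | (τ ^ n) (cycleRep τ x) = x}

theorem exists_pow_cycleRep_eq (hp : 0 < p) (hτ : τ ^ p = 1) (x : α) :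
    ∃ n < p, (τ ^ n) (cycleRep τ x) = x :=
  (sameCycle_cycleRep x).exists_pow_eq_of_pow_eq_one hp hτ

theorem pow_cycleIndex_cycleRep (hp : 0 < p) (hτ : τ ^ p = 1) (x : α) :
    (τ ^ cycleIndex τ x) (cycleRep τ x) = x :=
  Nat.sInf_mem (s := {n | (τ ^ n) (cycleRep τ x) = x}) <|
    let ⟨n, _, hn⟩ := exists_pow_cycleRep_eq hp hτ x; ⟨n, hn⟩

theorem cycleIndex_lt (hp : 0 < p) (hτ : τ ^ p = 1) (x : α) : cycleIndex τ x < p :=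
  let ⟨_, hn, hnx⟩ := exists_pow_cycleRep_eq hp hτ x
  (Nat.sInf_le hnx).trans_lt hn

theorem cycleIndex_cycleRep (x : α) : cycleIndex τ (cycleRep τ x) = 0 :=
  Nat.sInf_eq_zero.mpr <| Or.inl <| by simp

theorem cycleIndex_eq_of_pow_cycleRep_eq (hp : p.Prime) (hτ : τ ^ p = 1) (hx : τ x ≠ x)
    {n : ℕ} (hn : n < p) (h : (τ ^ n) (cycleRep τ x) = x) : cycleIndex τ x = n := by
  have hrep : τ (cycleRep τ x) ≠ cycleRep τ x :=
    fun hfix => hx ((sameCycle_cycleRep x).apply_eq_self_iff.mp hfix)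
  exact injOn_pow_apply_of_prime hp hτ hrep (cycleIndex_lt hp.pos hτ x) hn
    ((pow_cycleIndex_cycleRep hp.pos hτ x).trans h.symm)

end Equiv.Perm

section PermModule

open Finsupp Equiv.Perm

variable {α : Type*} (k : Type*) [CommRing k] (τ : Equiv.Perm α)

noncomputable def permShift : Module.End k (α →₀ k) :=
  (Finsupp.domLCongr τ).toLinearMap

open Classical in
noncomputable def fixedProj : Module.End k (α →₀ k) :=
  linearCombination k fun a => if τ a = a then single a 1 else 0

open Classical in
noncomputable def freeRepProj : Module.End k (α →₀ k) :=
  linearCombination k fun a => if τ a ≠ a ∧ cycleRep τ a = a then single a 1 else 0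

noncomputable def cycleHomotopy : Module.End k (α →₀ k) :=
  linearCombination k fun a =>
    ∑ l ∈ range (cycleIndex τ a), single ((τ ^ l) (cycleRep τ a)) 1

variable {k τ}

@[simp]
theorem permShift_single (a : α) (c : k) : permShift k τ (single a c) = single (τ a) c :=
  Finsupp.domLCongr_single τ a c

@[simp]
theorem permShift_pow_single (n : ℕ) (a : α) (c : k) :
    (permShift k τ ^ n) (single a c) = single ((τ ^ n) a) c := by
  induction n generalizing a with
  | zero => rfl
  | succ n ih =>
    rw [pow_succ, Module.End.mul_apply, permShift_single, ih, pow_succ, mul_apply]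

theorem sum_permShift_pow_single (p : ℕ) (a : α) (c : k) :
    (∑ i ∈ range p, permShift k τ ^ i) (single a c)
      = ∑ i ∈ range p, single ((τ ^ i) a) c := by
  simp [LinearMap.coe_sum]

open Classical in
theorem fixedProj_single (a : α) :
    fixedProj k τ (single a 1) = if τ a = a then single a 1 else 0 := by
  simp [fixedProj]

open Classical in
theorem freeRepProj_single (a : α) :
    freeRepProj k τ (single a 1) = if τ a ≠ a ∧ cycleRep τ a = a then single a 1 else 0 := by
  simp [freeRepProj]

theorem cycleHomotopy_single (a : α) :
    cycleHomotopy k τ (single a 1)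
      = ∑ l ∈ range (cycleIndex τ a), single ((τ ^ l) (cycleRep τ a)) 1 := by
  simp [cycleHomotopy]

theorem permShift_mul_fixedProj : permShift k τ * fixedProj k τ = fixedProj k τ := by
  ext a : 2
  by_cases ha : τ a = a <;> simp [fixedProj_single, ha]

theorem fixedProj_mul_permShift : fixedProj k τ * permShift k τ = fixedProj k τ := by
  ext a : 2
  by_cases ha : τ a = a <;> simp [fixedProj_single, ha]

variable {p : ℕ} (hp : p.Prime) (hτ : τ ^ p = 1)
include hp hτ

theorem freeRepProj_sum_pow_single_add_fixedProj_single (a : α) :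
    freeRepProj k τ ((∑ i ∈ range p, permShift k τ ^ i) (single a 1))
        + fixedProj k τ (single a 1) = single (cycleRep τ a) 1 := by
  classical
  rw [sum_permShift_pow_single, map_sum]
  by_cases ha : τ a = a
  · simp [freeRepProj_single, fixedProj_single, ha, pow_apply_eq_self_of_apply_eq_self ha,
      cycleRep_eq_self_of_fixed ha]
  have hterm (i : ℕ) : freeRepProj k τ (single ((τ ^ i) a) 1)
      = if (τ ^ i) a = cycleRep τ a then single (cycleRep τ a) 1 else 0 := by
    have hfree : τ ((τ ^ i) a) ≠ (τ ^ i) a :=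
      fun h => ha ((SameCycle.rfl.pow_left (n := i)).apply_eq_self_iff.mp h)
    rw [freeRepProj_single, cycleRep_pow_apply]
    by_cases h : (τ ^ i) a = cycleRep τ a
    · rw [if_pos ⟨hfree, h.symm⟩, if_pos h, h]
    · rw [if_neg fun h' => h h'.2.symm, if_neg h]
  obtain ⟨n, hn, hnρ⟩ := (sameCycle_cycleRep a).symm.exists_pow_eq_of_pow_eq_one hp.pos hτ
  rw [Finset.sum_congr rfl fun i _ => hterm i, Finset.sum_eq_single_of_mem n (mem_range.2 hn)]
  · simp [hnρ, fixedProj_single, ha]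
  · intro i hi hin
    rw [if_neg]
    exact fun h =>
      hin (injOn_pow_apply_of_prime hp hτ ha (mem_range.1 hi) hn (h.trans hnρ.symm))

theorem cycleHomotopy_single_sub_permShift (a : α) :
    cycleHomotopy k τ (single a 1) - permShift k τ (cycleHomotopy k τ (single a 1))
      = single (cycleRep τ a) 1 - single a 1 := by
  rw [cycleHomotopy_single, map_sum, ← sum_sub_distrib]
  simp only [permShift_single, ← mul_apply, ← pow_succ']
  rw [sum_range_sub' (fun l => single ((τ ^ l) (cycleRep τ a)) (1 : k)), pow_zero, one_apply,
    pow_cycleIndex_cycleRep hp.pos hτ]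

theorem one_sub_permShift_mul_cycleHomotopy :
    (1 - permShift k τ) * cycleHomotopy k τ
      = freeRepProj k τ * (∑ i ∈ range p, permShift k τ ^ i) + fixedProj k τ - 1 := by
  ext a : 2
  simp only [LinearMap.comp_apply, lsingle_apply, LinearMap.sub_apply, LinearMap.add_apply,
    Module.End.mul_apply, Module.End.one_apply]
  rw [cycleHomotopy_single_sub_permShift hp hτ,
    ← freeRepProj_sum_pow_single_add_fixedProj_single hp hτ]

theorem cycleHomotopy_mul_one_sub_permShift :
    cycleHomotopy k τ * (1 - permShift k τ)
      = (∑ i ∈ range p, permShift k τ ^ i) * freeRepProj k τ * permShift k τ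
        + fixedProj k τ - 1 := by
  classical
  ext a : 2
  simp only [LinearMap.comp_apply, lsingle_apply, LinearMap.sub_apply, LinearMap.add_apply,
    Module.End.mul_apply, Module.End.one_apply, map_sub, permShift_single, fixedProj_single,
    freeRepProj_single]
  by_cases ha : τ a = a
  · simp [ha]
  have hfree : τ (τ a) ≠ τ a := fun h => ha (τ.injective h)
  have hd := pow_cycleIndex_cycleRep hp.pos hτ a
  rw [if_neg ha, add_zero, cycleHomotopy_single, cycleHomotopy_single, cycleRep_apply]
  by_cases hrep : τ a = cycleRep τ a
  · obtain ⟨q, rfl⟩ := Nat.exists_eq_succ_of_ne_zero hp.ne_zero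
    have hq : cycleIndex τ a = q := by
      refine cycleIndex_eq_of_pow_cycleRep_eq hp hτ ha q.lt_succ_self ?_
      rw [← hrep, ← Equiv.Perm.mul_apply, ← pow_succ, hτ, one_apply]
    have hlast : (τ ^ q) (cycleRep τ a) = a := hq ▸ hd
    rw [if_pos ⟨hfree, hrep.symm⟩, hrep, cycleIndex_cycleRep, sum_range_zero,
      sum_permShift_pow_single, sum_range_succ, hq, hlast, sub_zero, add_sub_cancel_right]
  · have hnext : (τ ^ (cycleIndex τ a + 1)) (cycleRep τ a) = τ a := by
      rw [pow_succ', Equiv.Perm.mul_apply, hd]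
    have hlt : cycleIndex τ a + 1 < p :=
      lt_of_le_of_ne (cycleIndex_lt hp.pos hτ a) fun h =>
        hrep (hnext.symm.trans (by rw [h, hτ, one_apply]))
    have hsucc : cycleIndex τ (τ a) = cycleIndex τ a + 1 :=
      cycleIndex_eq_of_pow_cycleRep_eq hp hτ hfree hlt (by rwa [cycleRep_apply])
    rw [if_neg fun h => hrep h.2.symm, map_zero, hsucc, sum_range_succ, hd]
    abel

theorem isTight_permShift : IsTight p (permShift k τ) := by
  constructor
  · intro x hx
    have hA := LinearMap.congr_fun (one_sub_permShift_mul_cycleHomotopy (k := k) hp hτ) x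
    simp only [Module.End.mul_apply, LinearMap.sub_apply, LinearMap.add_apply,
      Module.End.one_apply, hx, map_zero, zero_add] at hA
    refine ⟨fixedProj k τ x, -cycleHomotopy k τ x,
      LinearMap.congr_fun permShift_mul_fixedProj x, ?_⟩
    rw [map_neg, neg_sub_neg, ← neg_sub, hA]
    abel
  · rintro m hm ⟨y, rfl⟩
    have hfix : fixedProj k τ (y - permShift k τ y) = 0 := by
      rw [map_sub, ← Module.End.mul_apply, fixedProj_mul_permShift, sub_self]
    have hB := LinearMap.congr_fun (cycleHomotopy_mul_one_sub_permShift (k := k) hp hτ)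
      (y - permShift k τ y)
    simp only [Module.End.mul_apply, LinearMap.sub_apply, LinearMap.add_apply,
      Module.End.one_apply, hm, sub_self, map_zero, hfix, add_zero] at hB
    exact ⟨_, (sub_eq_zero.mp hB.symm).symm⟩

end PermModule

theorem IsTight.of_linearEquiv {k V W : Type*} [CommRing k] [AddCommGroup V] [Module k V]
    [AddCommGroup W] [Module k W] {p : ℕ} {σ : Module.End k V} {σ' : Module.End k W}
    (e : V ≃ₗ[k] W) (he : σ' ∘ₗ e.toLinearMap = e.toLinearMap ∘ₗ σ)
    (h : IsTight p σ) : IsTight p σ' := by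
  have hσ (v : V) : σ' (e v) = e (σ v) := LinearMap.congr_fun he v
  have hN (v : V) : (∑ i ∈ range p, σ' ^ i) (e v) = e ((∑ i ∈ range p, σ ^ i) v) := by
    simp only [LinearMap.coe_sum, Finset.sum_apply, map_sum]
    exact sum_congr rfl fun i _ =>
      LinearMap.congr_fun (Module.End.commute_pow_left_of_commute he i) v
  obtain ⟨hker, hinv⟩ := h
  refine ⟨fun x hx => ?_, fun m hm ⟨y, hy⟩ => ?_⟩
  · obtain ⟨m, y, hm, hxy⟩ :=
      hker (e.symm x) (e.injective (by rw [← hN, e.apply_symm_apply, hx, map_zero]))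
    refine ⟨e m, e y, by rw [hσ, hm], ?_⟩
    rw [← e.apply_symm_apply x, hxy, map_add, map_sub, hσ]
  · obtain ⟨z, hz⟩ := hinv (e.symm m) (e.injective (by rw [← hσ, e.apply_symm_apply, hm]))
      ⟨e.symm y, e.injective <| by
        rw [map_sub, ← hσ, e.apply_symm_apply, e.apply_symm_apply, hy]⟩
    exact ⟨e z, by rw [hN, ← hz, e.apply_symm_apply]⟩

theorem finRotate_pow_self (n : ℕ) : finRotate n ^ n = 1 := by
  match n with
  | 0 => rfl
  | 1 => exact Subsingleton.elim _ _
  | n + 2 =>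
    have h := pow_orderOf_eq_one (finRotate (n + 2))
    rwa [isCycle_finRotate.orderOf, support_finRotate, card_univ, Fintype.card_fin] at h

theorem Equiv.arrowCongr_refl_pow {α β : Type*} (e : Equiv.Perm α) (n : ℕ) :
    (e.arrowCongr (Equiv.refl β) : Equiv.Perm (α → β)) ^ n
      = (e ^ n).arrowCongr (Equiv.refl β) := by
  induction n with
  | zero => rfl
  | succ n ih => rw [pow_succ, ih, pow_succ]; rfl

theorem cyclicPerm_comp_repr_symm {k M S : Type*} [CommRing k] [AddCommGroup M] [Module k M]
    (p : ℕ) (b : Module.Basis S k M) :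
    cyclicPerm k M p ∘ₗ (Basis.piTensorProduct fun _ : Fin p => b).repr.symm.toLinearMap
      = (Basis.piTensorProduct fun _ : Fin p => b).repr.symm.toLinearMap
        ∘ₗ permShift k ((finRotate p).arrowCongr (Equiv.refl S)) := by
  ext f : 2
  simp [cyclicPerm, PiTensorProduct.reindex_tprod]

theorem isTight_cyclicPerm {k M : Type*} [CommRing k] [AddCommGroup M] [Module k M]
    [Module.Free k M] {p : ℕ} (hp : p.Prime) : IsTight p (cyclicPerm k M p) := by
  have hτ : (finRotate p).arrowCongr (Equiv.refl (Module.Free.ChooseBasisIndex k M)) ^ p = 1 := by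
    rw [Equiv.arrowCongr_refl_pow, finRotate_pow_self]
    rfl
  exact (isTight_permShift hp hτ).of_linearEquiv _
    (cyclicPerm_comp_repr_symm p (Module.Free.chooseBasis k M))

theorem tensorPower_isTight_general {k M : Type*} [Field k] (p : ℕ)
    [Fact p.Prime] [AddCommGroup M] [Module k M] :
    IsTight p (cyclicPerm k M p) :=
  isTight_cyclicPerm Fact.out

/-- Over a perfect field `k` of characteristic `p`, the `k[Z/pZ]`-module
`M^{⊗p}` with the cyclic permutation action is tight: the map `Coker(tr) → Ker(tr)`
induced by the canonical map from invariants to coinvariants is an isomorphism. -/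
theorem tensorPower_isTight {k M : Type*} [Field k] [PerfectField k] (p : ℕ)
    [Fact p.Prime] [CharP k p] [AddCommGroup M] [Module k M] :
    IsTight p (cyclicPerm k M p) :=
  tensorPower_isTight_general p
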